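/- Let T > 0, M > 0, let ω be a modulus of continuity, and let (μⁿ_t)_{n∈ℕ} and (μ_t) be weak-* measurable families of Borel probability measures on L²_x defined for t ∈ [0,T), with μⁿ_t(B_M(0)) = 1 for a.e. t and all n, and with the uniform structure-function bound S²_r(μⁿ_·,T)² ≤ ω(r) for all r > 0 and all n. If ∫₀^T W₁(μⁿ_t,μ_t) dt → 0 as n → ∞, then the limit family satisfies: (i) ∫_{L²_x} ‖u‖²_{L²} dμ_t(u) ≤ M² for a.e. t ∈ [0,T); and (ii) S²_r(μ_·,T)² ≤ ω(r) for every r > 0. -/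

import Mathlib

open MeasureTheory Metric Filter
open scoped ENNReal Topology

noncomputable section

instance factTwoPiPos : Fact (0 < 2 * Real.pi) := ⟨by positivity⟩

/-- The `d`-dimensional torus `D = (ℝ/2πℤ)^d`. -/
abbrev Torus (d : ℕ) := Fin d → AddCircle (2 * Real.pi)

/-- The phase space `U = ℝ^d`. -/
abbrev Vec (d : ℕ) := EuclideanSpace ℝ (Fin d)

/-- The projection of `h ∈ ℝ^d` to the torus (so that `u (x + toTorus d h)` realizes the
identification of `u ∈ L²(D)` with a `2π`-periodic function on `ℝ^d`). -/
def toTorus (d : ℕ) (h : Vec d) : Torus d := fun i => ((h i : ℝ) : AddCircle (2 * Real.pi))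

/-- The space `L²_x = L²(D; ℝ^d)`. -/
abbrev L2 (d : ℕ) := Lp (Vec d) 2 (volume : Measure (Torus d))

instance (d : ℕ) : MeasurableSpace (L2 d) := borel _
instance (d : ℕ) : BorelSpace (L2 d) := ⟨rfl⟩

/-- The squared structure function `S²_r(μ)²` of a measure `μ` on `L²_x`. -/
def sqStructFn (d : ℕ) (μ : Measure (L2 d)) (r : ℝ) : ℝ :=
  ∫ u : L2 d, (∫ x : Torus d, ⨍ h in ball (0 : Vec d) r,
    ‖u (x + toTorus d h) - u x‖ ^ 2) ∂μ

/-- The structure function `S²_r(μ)`. -/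
def structFn (d : ℕ) (μ : Measure (L2 d)) (r : ℝ) : ℝ := Real.sqrt (sqStructFn d μ r)

/-- The squared time-averaged structure function `S²_r(μ_·, T)²`. -/
def sqStructFnT (d : ℕ) (μ : ℝ → Measure (L2 d)) (T r : ℝ) : ℝ :=
  ∫ t in Set.Ico (0 : ℝ) T, sqStructFn d (μ t) r

/-- The time-averaged structure function `S²_r(μ_·, T)`. -/
def structFnT (d : ℕ) (μ : ℝ → Measure (L2 d)) (T r : ℝ) : ℝ :=
  Real.sqrt (sqStructFnT d μ T r)

/-- Weak-* measurability of a time-parametrized family of measures on `L²_x`: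
`t ↦ ∫ F dμ_t` is measurable for every bounded continuous `F : L²_x → ℝ`. -/
def WeakStarMeasurable (d : ℕ) (μ : ℝ → Measure (L2 d)) : Prop :=
  ∀ F : BoundedContinuousFunction (L2 d) ℝ, Measurable fun t => ∫ u, F u ∂(μ t)

/-- `π` is a coupling (transport plan) between `μ` and `ν`. -/
def IsCoupling (d : ℕ) (μ ν : Measure (L2 d)) (π : Measure (L2 d × L2 d)) : Prop :=
  IsProbabilityMeasure π ∧ π.map Prod.fst = μ ∧ π.map Prod.snd = ν

/-- The `1`-Wasserstein distance `W₁(μ, ν) = inf_π ∫ ‖u - v‖ dπ(u,v)` over couplings. -/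
def W1 (d : ℕ) (μ ν : Measure (L2 d)) : ℝ≥0∞ :=
  ⨅ (π : Measure (L2 d × L2 d)) (_ : IsCoupling d μ ν π), ∫⁻ p, ‖p.1 - p.2‖₊ ∂π

/-- The metric `d_T(μ_·, ν_·) = ∫₀^T W₁(μ_t, ν_t) dt` on `L¹([0,T); P)`. -/
def dT (d : ℕ) (T : ℝ) (μ ν : ℝ → Measure (L2 d)) : ℝ≥0∞ :=
  ∫⁻ t in Set.Ico (0 : ℝ) T, W1 d (μ t) (ν t)

/-- Membership in `L¹([0,T); P)`: a weak-* measurable family of Borel probability measures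
on `L²_x` with `∫₀^T ∫ ‖u‖ dμ_t(u) dt < ∞`. -/
def MemL1P (d : ℕ) (T : ℝ) (μ : ℝ → Measure (L2 d)) : Prop :=
  WeakStarMeasurable d μ ∧ (∀ t ∈ Set.Ico (0 : ℝ) T, IsProbabilityMeasure (μ t)) ∧
    (∫⁻ t in Set.Ico (0 : ℝ) T, ∫⁻ u, ‖u‖₊ ∂(μ t)) < ⊤

/-!
For a nonnegative, bounded, `L`-Lipschitz functional `F` on `L²_x`, every coupling of `ν` and
`ν'` gives `∫ F dν ≤ ∫ F dν' + L W₁(ν', ν)`; integrating in time, `d_T(μⁿ, μ) → 0` yields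
`∫_S ∫ F dμ_t dt ≤ sup_n ∫_S ∫ F dμⁿ_t dt` for every set of times `S ⊆ [0,T)`.
Both `‖u‖²` and `⨍_{B_r} ‖τ_h u - u‖² dh` are increasing limits of such functionals, the
truncations `min (‖u‖, K)²` and `⨍_{B_r} min (‖τ_h u - u‖, K)² dh` (Lipschitz because
`u ↦ ‖τ_h u - u‖` is `2`-Lipschitz), so monotone convergence carries the bounds from `μⁿ` to `μ`;
for the `L²` bound this holds on every `S`, hence for a.e. `t`. On `B_M(0)` the truncation at
`K ≥ 2M` is exact, which makes `t ↦ S²_r(μⁿ_t)²` measurable and bounded.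
-/

open ProbabilityTheory
open scoped NNReal

instance : Fact ((2 : ℝ≥0∞) ≠ ∞) := ⟨ENNReal.ofNat_ne_top⟩

instance (d : ℕ) : ContinuousVAdd (DomAddAct (Torus d)) (L2 d) :=
  Lp.instContinuousVAddDomAddAct

theorem ofReal_integral_le_lintegral_ofReal {α : Type*} [MeasurableSpace α] {μ : Measure α}
    {f : α → ℝ} (hf : 0 ≤ᵐ[μ] f) :
    ENNReal.ofReal (∫ x, f x ∂μ) ≤ ∫⁻ x, ENNReal.ofReal (f x) ∂μ := by
  by_cases hfi : Integrable f μ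
  · exact (ofReal_integral_eq_lintegral_ofReal hfi hf).le
  · simp [integral_undef hfi]

theorem abs_min_sq_sub_min_sq_le {a b c : ℝ} (ha : 0 ≤ a) (hb : 0 ≤ b) (hc : 0 ≤ c) :
    |min a c ^ 2 - min b c ^ 2| ≤ 2 * c * |a - b| := by
  have hsum : |min a c + min b c| ≤ 2 * c := by
    rw [abs_of_nonneg (add_nonneg (le_min ha hc) (le_min hb hc))]
    linarith [min_le_right a c, min_le_right b c]
  have hdiff : |min a c - min b c| ≤ |a - b| :=
    (abs_min_sub_min_le_max a c b c).trans (by simp)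
  rw [sq_sub_sq, abs_mul]
  exact mul_le_mul hsum hdiff (abs_nonneg _) (by positivity)

theorem iSup_ofReal_min_natCast_sq {a : ℝ} (ha : 0 ≤ a) :
    ⨆ K : ℕ, ENNReal.ofReal (min a K ^ 2) = ENNReal.ofReal (a ^ 2) := by
  refine le_antisymm (iSup_le fun K => ENNReal.ofReal_le_ofReal ?_) ?_
  · exact pow_le_pow_left₀ (le_min ha K.cast_nonneg) (min_le_left _ _) 2
  · exact le_iSup_of_le ⌈a⌉₊ (by rw [min_eq_left (Nat.le_ceil a)])

section Truncation

variable {X H : Type*} [MeasurableSpace H] {P : Measure H} {ψ : X → H → ℝ}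

def truncSqIntegral (P : Measure H) (ψ : X → H → ℝ) (K : ℕ) (u : X) : ℝ :=
  ∫ h, min (ψ u h) K ^ 2 ∂P

theorem min_sq_le_sq {a : ℝ} (ha : 0 ≤ a) (K : ℕ) : min a K ^ 2 ≤ (K : ℝ) ^ 2 :=
  pow_le_pow_left₀ (le_min ha K.cast_nonneg) (min_le_right _ _) 2

theorem truncSqIntegral_nonneg (K : ℕ) (u : X) : 0 ≤ truncSqIntegral P ψ K u :=
  integral_nonneg fun _ => sq_nonneg _

theorem truncSqIntegral_eq_of_le {K : ℕ} {u : X} (hu : ∀ h, ψ u h ≤ K) :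
    truncSqIntegral P ψ K u = ∫ h, ψ u h ^ 2 ∂P := by
  simp only [truncSqIntegral, min_eq_left (hu _)]

variable [IsZeroOrProbabilityMeasure P]

theorem integrable_min_sq (hψ0 : ∀ u h, 0 ≤ ψ u h) (hψm : ∀ u, Measurable (ψ u)) (K : ℕ)
    (u : X) : Integrable (fun h => min (ψ u h) K ^ 2) P := by
  refine .of_bound (((hψm u).min measurable_const).pow_const 2).aestronglyMeasurable
    ((K : ℝ) ^ 2) (ae_of_all _ fun h => ?_)
  rw [Real.norm_of_nonneg (sq_nonneg _)]
  exact min_sq_le_sq (hψ0 u h) K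

theorem truncSqIntegral_le_sq (hψ0 : ∀ u h, 0 ≤ ψ u h) (K : ℕ) (u : X) :
    truncSqIntegral P ψ K u ≤ (K : ℝ) ^ 2 := by
  refine (le_abs_self _).trans ?_
  have := norm_integral_le_of_norm_le_const (μ := P)
    (ae_of_all _ fun h => (Real.norm_of_nonneg (sq_nonneg (min (ψ u h) K))).trans_le
      (min_sq_le_sq (hψ0 u h) K))
  exact this.trans (mul_le_of_le_one_right (by positivity) measureReal_le_one)

theorem monotone_truncSqIntegral (hψ0 : ∀ u h, 0 ≤ ψ u h) (hψm : ∀ u, Measurable (ψ u))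
    (u : X) : Monotone fun K : ℕ => truncSqIntegral P ψ K u := fun i j hij =>
  integral_mono (integrable_min_sq hψ0 hψm i u) (integrable_min_sq hψ0 hψm j u) fun h =>
    pow_le_pow_left₀ (le_min (hψ0 u h) i.cast_nonneg)
      (min_le_min_left _ (Nat.cast_le.2 hij)) 2

theorem iSup_ofReal_truncSqIntegral (hψ0 : ∀ u h, 0 ≤ ψ u h) (hψm : ∀ u, Measurable (ψ u))
    (u : X) : ⨆ K : ℕ, ENNReal.ofReal (truncSqIntegral P ψ K u)
      = ∫⁻ h, ENNReal.ofReal (ψ u h ^ 2) ∂P := by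
  have hK : ∀ K : ℕ, ENNReal.ofReal (truncSqIntegral P ψ K u)
      = ∫⁻ h, ENNReal.ofReal (min (ψ u h) K ^ 2) ∂P := fun K =>
    ofReal_integral_eq_lintegral_ofReal (integrable_min_sq hψ0 hψm K u)
      (ae_of_all _ fun _ => sq_nonneg _)
  simp_rw [hK, ← iSup_ofReal_min_natCast_sq (hψ0 u _)]
  refine (lintegral_iSup (fun K => (((hψm u).min measurable_const).pow_const 2).ennreal_ofReal)
    fun i j hij h => ENNReal.ofReal_le_ofReal ?_).symm
  exact pow_le_pow_left₀ (le_min (hψ0 u h) i.cast_nonneg)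
    (min_le_min_left _ (Nat.cast_le.2 hij)) 2

theorem lipschitzWith_truncSqIntegral [PseudoMetricSpace X] (hψ0 : ∀ u h, 0 ≤ ψ u h)
    (hψm : ∀ u, Measurable (ψ u)) {L : ℝ≥0} (hψL : ∀ h, LipschitzWith L fun u => ψ u h)
    (K : ℕ) : LipschitzWith (2 * K * L) (truncSqIntegral P ψ K) := by
  refine LipschitzWith.of_dist_le_mul fun u v => ?_
  rw [Real.dist_eq, truncSqIntegral, truncSqIntegral,
    ← integral_sub (integrable_min_sq hψ0 hψm K u) (integrable_min_sq hψ0 hψm K v)]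
  have hpt : ∀ h, ‖min (ψ u h) K ^ 2 - min (ψ v h) K ^ 2‖ ≤ 2 * K * L * dist u v := by
    intro h
    rw [Real.norm_eq_abs, mul_assoc]
    refine (abs_min_sq_sub_min_sq_le (hψ0 u h) (hψ0 v h) K.cast_nonneg).trans ?_
    gcongr
    exact (hψL h).dist_le_mul u v
  push_cast
  refine (norm_integral_le_of_norm_le_const (ae_of_all _ hpt)).trans ?_
  exact mul_le_of_le_one_right (by positivity) measureReal_le_one

end Truncation

section Wasserstein

variable {d : ℕ}

theorem lintegral_ofReal_le_add_mul_W1 {ν₁ ν₂ : Measure (L2 d)} {F : L2 d → ℝ} {L : ℝ≥0}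
    (hL : L ≠ 0) (hF : LipschitzWith L F) :
    ∫⁻ u, ENNReal.ofReal (F u) ∂ν₂ ≤ ∫⁻ u, ENNReal.ofReal (F u) ∂ν₁ + L * W1 d ν₁ ν₂ := by
  have hFm : Measurable fun u => ENNReal.ofReal (F u) := hF.continuous.measurable.ennreal_ofReal
  have hpt : ∀ u v : L2 d, ENNReal.ofReal (F v) ≤ ENNReal.ofReal (F u) + L * ‖u - v‖₊ := by
    intro u v
    have := hF.dist_le_mul v u
    rw [Real.dist_eq, dist_comm, dist_eq_norm] at this
    calc ENNReal.ofReal (F v) ≤ ENNReal.ofReal (F u + L * ‖u - v‖) :=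
          ENNReal.ofReal_le_ofReal (by linarith [le_abs_self (F v - F u)])
      _ ≤ ENNReal.ofReal (F u) + L * ‖u - v‖₊ := by
          refine ENNReal.ofReal_add_le.trans_eq ?_
          rw [ENNReal.ofReal_mul L.coe_nonneg, ofReal_norm, ENNReal.ofReal_coe_nnreal,
            enorm_eq_nnnorm]
  have hL' : (L : ℝ≥0∞) ≠ 0 := by exact_mod_cast hL
  simp_rw [W1, ENNReal.mul_iInf_of_ne hL' ENNReal.coe_ne_top, ENNReal.add_iInf]
  refine le_iInf₂ fun π ⟨_, h₁, h₂⟩ => ?_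
  calc ∫⁻ u, ENNReal.ofReal (F u) ∂ν₂ = ∫⁻ p, ENNReal.ofReal (F p.2) ∂π := by
        rw [← h₂, lintegral_map hFm measurable_snd]
    _ ≤ ∫⁻ p, (ENNReal.ofReal (F p.1) + L * ‖p.1 - p.2‖₊) ∂π := lintegral_mono fun p => hpt _ _
    _ = _ := by
        rw [lintegral_add_left (f := fun p : L2 d × L2 d => ENNReal.ofReal (F p.1))
          (hFm.comp measurable_fst), ← h₁, lintegral_map hFm measurable_fst,
          lintegral_const_mul' _ _ ENNReal.coe_ne_top]

end Wasserstein

section WeakStar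

variable {d : ℕ} {ν : ℝ → Measure (L2 d)} {s : Set ℝ}

theorem WeakStarMeasurable.measurable_integral (hν : WeakStarMeasurable d ν) {F : L2 d → ℝ}
    (hF : Continuous F) {C : ℝ} (hFC : ∀ u, ‖F u‖ ≤ C) :
    Measurable fun t => ∫ u, F u ∂ν t :=
  hν (.ofNormedAddCommGroup F hF C hFC)

theorem WeakStarMeasurable.aemeasurable_lintegral (hν : WeakStarMeasurable d ν)
    (hs : MeasurableSet s) (hprob : ∀ t ∈ s, IsProbabilityMeasure (ν t)) {F : L2 d → ℝ}
    (hF : Continuous F) (hF0 : ∀ u, 0 ≤ F u) {C : ℝ} (hFC : ∀ u, F u ≤ C) :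
    AEMeasurable (fun t => ∫⁻ u, ENNReal.ofReal (F u) ∂ν t) (volume.restrict s) := by
  have hFC' : ∀ u, ‖F u‖ ≤ C := fun u => (Real.norm_of_nonneg (hF0 u)).trans_le (hFC u)
  refine (hν.measurable_integral hF hFC').ennreal_ofReal.aemeasurable.congr ?_
  refine ae_restrict_of_forall_mem hs fun t ht => ?_
  have := hprob t ht
  exact ofReal_integral_eq_lintegral_ofReal
    (.of_bound hF.aestronglyMeasurable C (ae_of_all _ hFC')) (ae_of_all _ hF0)

end WeakStar

section Convergence

variable {d : ℕ} {T : ℝ} {μn : ℕ → ℝ → Measure (L2 d)} {μ : ℝ → Measure (L2 d)} {s : Set ℝ}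

theorem setLIntegral_lintegral_le_of_tendsto_dT
    (hmeasn : ∀ n, WeakStarMeasurable d (μn n))
    (hprobn : ∀ n, ∀ t ∈ Set.Ico (0 : ℝ) T, IsProbabilityMeasure (μn n t))
    (hconv : Tendsto (fun n => dT d T (μn n) μ) atTop (𝓝 0))
    (hs : MeasurableSet s) (hsT : s ⊆ Set.Ico 0 T) {F : L2 d → ℝ} {L : ℝ≥0}
    (hF : LipschitzWith L F) (hF0 : ∀ u, 0 ≤ F u) {C : ℝ} (hFC : ∀ u, F u ≤ C) {B : ℝ≥0∞}
    (hB : ∀ n, ∫⁻ t in s, ∫⁻ u, ENNReal.ofReal (F u) ∂μn n t ≤ B) :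
    ∫⁻ t in s, ∫⁻ u, ENNReal.ofReal (F u) ∂μ t ≤ B := by
  -- `L + 1` rather than `L`: with `L = 0`, `L * W₁ = 0` even when `W₁ = ∞`
  have hL : L + 1 ≠ 0 := by positivity
  have hbound : ∀ n, ∫⁻ t in s, ∫⁻ u, ENNReal.ofReal (F u) ∂μ t
      ≤ B + (L + 1 : ℝ≥0) * dT d T (μn n) μ := fun n =>
    calc ∫⁻ t in s, ∫⁻ u, ENNReal.ofReal (F u) ∂μ t
        ≤ ∫⁻ t in s, (∫⁻ u, ENNReal.ofReal (F u) ∂μn n t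
            + (L + 1 : ℝ≥0) * W1 d (μn n t) (μ t)) :=
          lintegral_mono fun t => lintegral_ofReal_le_add_mul_W1 hL (hF.weaken le_self_add)
      _ = (∫⁻ t in s, ∫⁻ u, ENNReal.ofReal (F u) ∂μn n t)
            + (L + 1 : ℝ≥0) * ∫⁻ t in s, W1 d (μn n t) (μ t) := by
          rw [lintegral_add_left' ((hmeasn n).aemeasurable_lintegral hs
            (fun t ht => hprobn n t (hsT ht)) hF.continuous hF0 hFC),
            lintegral_const_mul' _ _ ENNReal.coe_ne_top]
      _ ≤ B + (L + 1 : ℝ≥0) * dT d T (μn n) μ := by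
          gcongr
          · exact hB n
          · exact lintegral_mono_set hsT
  have hlim : Tendsto (fun n => B + (L + 1 : ℝ≥0) * dT d T (μn n) μ) atTop
      (𝓝 (B + (L + 1 : ℝ≥0) * 0)) :=
    tendsto_const_nhds.add (ENNReal.Tendsto.const_mul hconv (Or.inr ENNReal.coe_ne_top))
  rw [mul_zero, add_zero] at hlim
  exact ge_of_tendsto' hlim hbound

theorem setLIntegral_lintegral_iSup_le_of_tendsto_dT
    (hmeasn : ∀ n, WeakStarMeasurable d (μn n)) (hmeas : WeakStarMeasurable d μ)
    (hprobn : ∀ n, ∀ t ∈ Set.Ico (0 : ℝ) T, IsProbabilityMeasure (μn n t))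
    (hprob : ∀ t ∈ Set.Ico (0 : ℝ) T, IsProbabilityMeasure (μ t))
    (hconv : Tendsto (fun n => dT d T (μn n) μ) atTop (𝓝 0))
    (hs : MeasurableSet s) (hsT : s ⊆ Set.Ico 0 T) {F : ℕ → L2 d → ℝ}
    (hF : ∀ K, ∃ L, LipschitzWith L (F K)) (hF0 : ∀ K u, 0 ≤ F K u)
    (hFC : ∀ K, ∃ C, ∀ u, F K u ≤ C) (hFmono : ∀ u, Monotone fun K => F K u) {B : ℝ≥0∞}
    (hB : ∀ n, ∫⁻ t in s, ∫⁻ u, ⨆ K, ENNReal.ofReal (F K u) ∂μn n t ≤ B) :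
    ∫⁻ t in s, ∫⁻ u, ⨆ K, ENNReal.ofReal (F K u) ∂μ t ≤ B := by
  choose L hL using hF
  choose C hC using hFC
  have hmono : ∀ u, Monotone fun K => ENNReal.ofReal (F K u) := fun u _ _ hij =>
    ENNReal.ofReal_le_ofReal (hFmono u hij)
  have hMCT : ∀ ν : Measure (L2 d),
      ∫⁻ u, ⨆ K, ENNReal.ofReal (F K u) ∂ν = ⨆ K, ∫⁻ u, ENNReal.ofReal (F K u) ∂ν := fun ν =>
    lintegral_iSup (fun K => (hL K).continuous.measurable.ennreal_ofReal) fun _ _ hij u =>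
      hmono u hij
  simp_rw [hMCT] at hB ⊢
  rw [lintegral_iSup' (fun K => hmeas.aemeasurable_lintegral hs (fun t ht => hprob t (hsT ht))
    (hL K).continuous (hF0 K) (hC K)) (ae_of_all _ fun t _ _ hij => lintegral_mono fun u =>
      hmono u hij)]
  refine iSup_le fun K => setLIntegral_lintegral_le_of_tendsto_dT hmeasn hprobn hconv hs hsT
    (hL K) (hF0 K) (hC K) fun n => (lintegral_mono fun t => ?_).trans (hB n)
  exact le_iSup (fun K => ∫⁻ u, ENNReal.ofReal (F K u) ∂μn n t) K

end Convergence

theorem MeasureTheory.L2.norm_sq_eq_integral_norm_sq {α E : Type*} [MeasurableSpace α]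
    {μ : Measure α} [NormedAddCommGroup E] [InnerProductSpace ℝ E] (f : α →₂[μ] E) :
    ‖f‖ ^ 2 = ∫ a, ‖f a‖ ^ 2 ∂μ := by
  rw [← real_inner_self_eq_norm_sq, L2.inner_def]
  simp_rw [real_inner_self_eq_norm_sq]

theorem ae_norm_lt_of_measure_ball_eq_one {E : Type*} [NormedAddCommGroup E]
    [MeasurableSpace E] [OpensMeasurableSpace E] {ν : Measure E} [IsProbabilityMeasure ν]
    {M : ℝ} (h : ν (ball 0 M) = 1) : ∀ᵐ u ∂ν, ‖u‖ < M := by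
  have : ∀ᵐ u ∂ν, u ∈ ball (0 : E) M :=
    (ae_iff_measure_eq measurableSet_ball.nullMeasurableSet).2 (by rw [measure_univ]; exact h)
  simpa using this

section Increment

variable {d : ℕ}

theorem continuous_toTorus : Continuous (toTorus d) :=
  continuous_pi fun i => (AddCircle.continuous_mk' _).comp (PiLp.continuous_apply 2 _ i)

/-- `‖τ_h u - u‖_{L²}` for the translate `τ_h u = u (· + h)`: the domain action
`DomAddAct.mk c +ᵥ u` is `u (c + ·)`. -/
def incrementNorm (d : ℕ) (u : L2 d) (h : Vec d) : ℝ :=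
  ‖(DomAddAct.mk (toTorus d h) +ᵥ u) - u‖

theorem coeFn_translate_sub (u : L2 d) (h : Vec d) :
    ⇑((DomAddAct.mk (toTorus d h) +ᵥ u) - u) =ᵐ[volume] fun x => u (x + toTorus d h) - u x := by
  filter_upwards [Lp.coeFn_sub (DomAddAct.mk (toTorus d h) +ᵥ u) u,
    DomAddAct.vadd_Lp_ae_eq (DomAddAct.mk (toTorus d h)) u] with x hsub hvadd
  rw [hsub, Pi.sub_apply, hvadd, Equiv.symm_apply_apply, vadd_eq_add, add_comm]

theorem incrementNorm_sq (u : L2 d) (h : Vec d) :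
    incrementNorm d u h ^ 2 = ∫ x, ‖u (x + toTorus d h) - u x‖ ^ 2 := by
  rw [incrementNorm, L2.norm_sq_eq_integral_norm_sq]
  exact integral_congr_ae ((coeFn_translate_sub u h).mono fun x hx => by simp only [hx])

theorem incrementNorm_le (u : L2 d) (h : Vec d) : incrementNorm d u h ≤ 2 * ‖u‖ :=
  (norm_sub_le _ _).trans_eq (by rw [DomAddAct.norm_vadd_Lp]; exact (two_mul _).symm)

theorem continuous_incrementNorm (u : L2 d) : Continuous (incrementNorm d u) :=
  (((DomAddAct.continuous_mk.comp continuous_toTorus).vadd continuous_const).sub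
    continuous_const).norm

theorem lipschitzWith_incrementNorm (h : Vec d) : LipschitzWith 2 fun u => incrementNorm d u h := by
  refine LipschitzWith.of_dist_le_mul fun u v => ?_
  set c := DomAddAct.mk (toTorus d h)
  have hlin : ((c +ᵥ u) - u) - ((c +ᵥ v) - v) = (c +ᵥ (u - v)) - (u - v) := by
    rw [DomAddAct.vadd_Lp_sub]
    abel
  rw [Real.dist_eq, dist_eq_norm, NNReal.coe_ofNat]
  calc |incrementNorm d u h - incrementNorm d v h| ≤ ‖((c +ᵥ u) - u) - ((c +ᵥ v) - v)‖ :=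
        abs_norm_sub_norm_le _ _
    _ = incrementNorm d (u - v) h := by rw [hlin, incrementNorm]
    _ ≤ 2 * ‖u - v‖ := incrementNorm_le _ _

theorem integrable_incrementNorm_sq (u : L2 d) (r : ℝ) :
    Integrable (fun h => incrementNorm d u h ^ 2) volume[|ball (0 : Vec d) r] := by
  refine .of_bound ((continuous_incrementNorm u).pow 2).aestronglyMeasurable ((2 * ‖u‖) ^ 2)
    (ae_of_all _ fun h => ?_)
  rw [Real.norm_of_nonneg (sq_nonneg _)]
  exact pow_le_pow_left₀ (norm_nonneg _) (incrementNorm_le u h) 2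

theorem integral_setAverage_norm_sub_sq (u : L2 d) (r : ℝ) :
    ∫ x : Torus d, ⨍ h in ball (0 : Vec d) r, ‖u (x + toTorus d h) - u x‖ ^ 2
      = ∫ h, incrementNorm d u h ^ 2 ∂volume[|ball (0 : Vec d) r] := by
  set g : Torus d × Vec d → ℝ := fun p => ‖u (p.1 + toTorus d p.2) - u p.1‖ ^ 2
  have hg : AEStronglyMeasurable g (volume.prod volume[|ball (0 : Vec d) r]) :=
    (((Lp.stronglyMeasurable u).comp_measurable
      (measurable_fst.add (continuous_toTorus.measurable.comp measurable_snd))).sub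
      ((Lp.stronglyMeasurable u).comp_measurable measurable_fst)).norm.pow 2
      |>.aestronglyMeasurable
  have hint : Integrable g (volume.prod volume[|ball (0 : Vec d) r]) := by
    refine (integrable_prod_iff' hg).2 ⟨ae_of_all _ fun h => ?_, ?_⟩
    · refine Integrable.congr ((memLp_two_iff_integrable_sq_norm (Lp.aestronglyMeasurable _)).1
        (Lp.memLp ((DomAddAct.mk (toTorus d h) +ᵥ u) - u))) ?_
      exact (coeFn_translate_sub u h).mono fun x hx => by simp only [g, hx]
    · simp_rw [g, Real.norm_of_nonneg (sq_nonneg _), ← incrementNorm_sq]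
      exact integrable_incrementNorm_sq u r
  simp_rw [setAverage_eq']
  exact (integral_integral_swap hint).trans (by simp_rw [← incrementNorm_sq]; rfl)

end Increment

section StructureFunction

variable {d : ℕ}

/-- `⨍_{B_r(0)} ‖τ_h u - u‖²_{L²} dh`; `volume[|s]` is the normalized restriction to `s`. -/
def meanSqIncrement (d : ℕ) (r : ℝ) (u : L2 d) : ℝ≥0∞ :=
  ∫⁻ h, ENNReal.ofReal (incrementNorm d u h ^ 2) ∂volume[|ball (0 : Vec d) r]

abbrev truncMeanSqIncrement (d : ℕ) (r : ℝ) (K : ℕ) : L2 d → ℝ :=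
  truncSqIntegral volume[|ball (0 : Vec d) r] (incrementNorm d) K

theorem sqStructFn_eq_integral_integral (ν : Measure (L2 d)) (r : ℝ) :
    sqStructFn d ν r = ∫ u, ∫ h, incrementNorm d u h ^ 2 ∂volume[|ball (0 : Vec d) r] ∂ν := by
  simp only [sqStructFn, integral_setAverage_norm_sub_sq]

theorem sqStructFn_nonneg (ν : Measure (L2 d)) (r : ℝ) : 0 ≤ sqStructFn d ν r := by
  rw [sqStructFn_eq_integral_integral]
  exact integral_nonneg fun u => integral_nonneg fun h => sq_nonneg _

theorem ofReal_integral_incrementNorm_sq (u : L2 d) (r : ℝ) :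
    ENNReal.ofReal (∫ h, incrementNorm d u h ^ 2 ∂volume[|ball (0 : Vec d) r])
      = meanSqIncrement d r u :=
  ofReal_integral_eq_lintegral_ofReal (integrable_incrementNorm_sq u r)
    (ae_of_all _ fun _ => sq_nonneg _)

theorem ofReal_sqStructFn_le (ν : Measure (L2 d)) (r : ℝ) :
    ENNReal.ofReal (sqStructFn d ν r) ≤ ∫⁻ u, meanSqIncrement d r u ∂ν := by
  rw [sqStructFn_eq_integral_integral]
  refine (ofReal_integral_le_lintegral_ofReal (ae_of_all _ fun u =>
    integral_nonneg fun h => sq_nonneg _)).trans_eq ?_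
  simp_rw [ofReal_integral_incrementNorm_sq]

theorem ofReal_sqStructFnT_le (ν : ℝ → Measure (L2 d)) (T r : ℝ) :
    ENNReal.ofReal (sqStructFnT d ν T r)
      ≤ ∫⁻ t in Set.Ico 0 T, ∫⁻ u, meanSqIncrement d r u ∂ν t :=
  (ofReal_integral_le_lintegral_ofReal (ae_of_all _ fun _ => sqStructFn_nonneg _ _)).trans
    (lintegral_mono fun _ => ofReal_sqStructFn_le _ _)

theorem truncMeanSqIncrement_eq {r : ℝ} {K : ℕ} {u : L2 d} (hu : 2 * ‖u‖ ≤ K) :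
    truncMeanSqIncrement d r K u = ∫ h, incrementNorm d u h ^ 2 ∂volume[|ball (0 : Vec d) r] :=
  truncSqIntegral_eq_of_le fun h => (incrementNorm_le u h).trans hu

theorem iSup_ofReal_truncMeanSqIncrement (r : ℝ) (u : L2 d) :
    ⨆ K : ℕ, ENNReal.ofReal (truncMeanSqIncrement d r K u) = meanSqIncrement d r u :=
  iSup_ofReal_truncSqIntegral (fun _ _ => norm_nonneg _)
    (fun u => (continuous_incrementNorm u).measurable) u

theorem lipschitzWith_truncMeanSqIncrement (r : ℝ) (K : ℕ) :
    LipschitzWith (2 * K * 2) (truncMeanSqIncrement d r K) :=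
  lipschitzWith_truncSqIntegral (fun _ _ => norm_nonneg _)
    (fun u => (continuous_incrementNorm u).measurable) lipschitzWith_incrementNorm K

theorem norm_truncMeanSqIncrement_le (r : ℝ) (K : ℕ) (u : L2 d) :
    ‖truncMeanSqIncrement d r K u‖ ≤ (K : ℝ) ^ 2 :=
  (Real.norm_of_nonneg (truncSqIntegral_nonneg K u)).trans_le
    (truncSqIntegral_le_sq (fun _ _ => norm_nonneg _) K u)

theorem sqStructFn_eq_integral_truncMeanSqIncrement {ν : Measure (L2 d)} {r : ℝ} {K : ℕ}
    (hK : ∀ᵐ u ∂ν, 2 * ‖u‖ ≤ K) :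
    sqStructFn d ν r = ∫ u, truncMeanSqIncrement d r K u ∂ν := by
  rw [sqStructFn_eq_integral_integral]
  exact integral_congr_ae (hK.mono fun u hu => (truncMeanSqIncrement_eq hu).symm)

theorem lintegral_meanSqIncrement_eq {ν : Measure (L2 d)} [IsFiniteMeasure ν] {r : ℝ} {K : ℕ}
    (hK : ∀ᵐ u ∂ν, 2 * ‖u‖ ≤ K) :
    ∫⁻ u, meanSqIncrement d r u ∂ν = ENNReal.ofReal (sqStructFn d ν r) := by
  rw [sqStructFn_eq_integral_truncMeanSqIncrement hK, ofReal_integral_eq_lintegral_ofReal]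
  · refine lintegral_congr_ae (hK.mono fun u hu => ?_)
    simp only [truncMeanSqIncrement_eq hu, ofReal_integral_incrementNorm_sq]
  · exact .of_bound (lipschitzWith_truncMeanSqIncrement r K).continuous.aestronglyMeasurable
      _ (ae_of_all _ fun u => norm_truncMeanSqIncrement_le r K u)
  · exact ae_of_all _ fun u => truncSqIntegral_nonneg K u

end StructureFunction

section Limit

variable {d : ℕ} {T M : ℝ} {μn : ℕ → ℝ → Measure (L2 d)} {μ : ℝ → Measure (L2 d)}

theorem ae_lintegral_le_of_tendsto_dT
    (hmeasn : ∀ n, WeakStarMeasurable d (μn n)) (hmeas : WeakStarMeasurable d μ)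
    (hprobn : ∀ n, ∀ t ∈ Set.Ico (0 : ℝ) T, IsProbabilityMeasure (μn n t))
    (hprob : ∀ t ∈ Set.Ico (0 : ℝ) T, IsProbabilityMeasure (μ t))
    (hconv : Tendsto (fun n => dT d T (μn n) μ) atTop (𝓝 0)) {F : L2 d → ℝ} {L : ℝ≥0}
    (hF : LipschitzWith L F) (hF0 : ∀ u, 0 ≤ F u) {C : ℝ} (hFC : ∀ u, F u ≤ C) {B : ℝ≥0∞}
    (hB : ∀ n, ∀ᵐ t ∂(volume.restrict (Set.Ico (0 : ℝ) T)),
      ∫⁻ u, ENNReal.ofReal (F u) ∂μn n t ≤ B) :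
    ∀ᵐ t ∂(volume.restrict (Set.Ico (0 : ℝ) T)), ∫⁻ u, ENNReal.ofReal (F u) ∂μ t ≤ B := by
  refine ae_le_of_forall_setLIntegral_le_of_sigmaFinite₀
    (hmeas.aemeasurable_lintegral measurableSet_Ico hprob hF.continuous hF0 hFC)
    fun s hs _ => ?_
  rw [Measure.restrict_restrict hs]
  exact setLIntegral_lintegral_le_of_tendsto_dT hmeasn hprobn hconv
    (hs.inter measurableSet_Ico) Set.inter_subset_right hF hF0 hFC fun n =>
      lintegral_mono_ae (ae_restrict_of_ae_restrict_of_subset Set.inter_subset_right (hB n))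

theorem ae_integral_norm_sq_le_of_tendsto_dT
    (hmeasn : ∀ n, WeakStarMeasurable d (μn n)) (hmeas : WeakStarMeasurable d μ)
    (hprobn : ∀ n, ∀ t ∈ Set.Ico (0 : ℝ) T, IsProbabilityMeasure (μn n t))
    (hprob : ∀ t ∈ Set.Ico (0 : ℝ) T, IsProbabilityMeasure (μ t))
    (hballn : ∀ n, ∀ᵐ t ∂(volume.restrict (Set.Ico (0 : ℝ) T)), μn n t (ball (0 : L2 d) M) = 1)
    (hconv : Tendsto (fun n => dT d T (μn n) μ) atTop (𝓝 0)) :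
    ∀ᵐ t ∂(volume.restrict (Set.Ico (0 : ℝ) T)), ∫ u, ‖u‖ ^ 2 ∂μ t ≤ M ^ 2 := by
  -- `F K u = min ‖u‖ K ^ 2`, the truncation over a one-point space
  set F : ℕ → L2 d → ℝ := truncSqIntegral (Measure.dirac ()) fun u _ => ‖u‖
  have hψ0 : ∀ (u : L2 d) (_ : Unit), 0 ≤ ‖u‖ := fun u _ => norm_nonneg u
  have hψm : ∀ u : L2 d, Measurable fun _ : Unit => ‖u‖ := fun _ => measurable_const
  have hFL : ∀ K : ℕ, LipschitzWith (2 * K * 1) (F K) :=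
    lipschitzWith_truncSqIntegral hψ0 hψm fun _ => lipschitzWith_one_norm
  have hFu : ∀ K u, F K u ≤ ‖u‖ ^ 2 := fun K u => by
    simp only [F, truncSqIntegral, integral_dirac]
    exact pow_le_pow_left₀ (le_min (norm_nonneg u) K.cast_nonneg) (min_le_left _ _) 2
  have hFK : ∀ K, ∀ᵐ t ∂(volume.restrict (Set.Ico (0 : ℝ) T)),
      ∫⁻ u, ENNReal.ofReal (F K u) ∂μ t ≤ ENNReal.ofReal (M ^ 2) := fun K =>
    ae_lintegral_le_of_tendsto_dT hmeasn hmeas hprobn hprob hconv (hFL K)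
      (truncSqIntegral_nonneg K) (truncSqIntegral_le_sq hψ0 K) fun n => by
        filter_upwards [hballn n, ae_restrict_mem measurableSet_Ico] with t hb ht
        have := hprobn n t ht
        refine (lintegral_mono_ae ((ae_norm_lt_of_measure_ball_eq_one hb).mono fun u hu =>
          ENNReal.ofReal_le_ofReal ((hFu K u).trans (pow_le_pow_left₀ (norm_nonneg u) hu.le 2)))
          ).trans_eq ?_
        simp
  filter_upwards [ae_all_iff.2 hFK] with t ht
  have hsup : ∀ u, ⨆ K, ENNReal.ofReal (F K u) = ENNReal.ofReal (‖u‖ ^ 2) := fun u => by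
    rw [iSup_ofReal_truncSqIntegral hψ0 hψm, lintegral_dirac]
  have hlint : ∫⁻ u, ENNReal.ofReal (‖u‖ ^ 2) ∂μ t ≤ ENNReal.ofReal (M ^ 2) := by
    simp_rw [← hsup]
    rw [lintegral_iSup (fun K => (hFL K).continuous.measurable.ennreal_ofReal)
      fun _ _ hij u => ENNReal.ofReal_le_ofReal (monotone_truncSqIntegral hψ0 hψm u hij)]
    exact iSup_le ht
  rw [integral_eq_lintegral_of_nonneg_ae (ae_of_all _ fun u => sq_nonneg _)
    (continuous_norm.pow 2).aestronglyMeasurable]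
  exact ENNReal.toReal_le_of_le_ofReal (sq_nonneg M) hlint

theorem setLIntegral_lintegral_meanSqIncrement_eq {ν : ℝ → Measure (L2 d)}
    (hmeas : WeakStarMeasurable d ν)
    (hprob : ∀ t ∈ Set.Ico (0 : ℝ) T, IsProbabilityMeasure (ν t))
    (hball : ∀ᵐ t ∂(volume.restrict (Set.Ico (0 : ℝ) T)), ν t (ball (0 : L2 d) M) = 1)
    (r : ℝ) :
    ∫⁻ t in Set.Ico 0 T, ∫⁻ u, meanSqIncrement d r u ∂ν t
      = ENNReal.ofReal (sqStructFnT d ν T r) := by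
  set K := ⌈2 * M⌉₊
  have hK : ∀ᵐ t ∂(volume.restrict (Set.Ico (0 : ℝ) T)),
      t ∈ Set.Ico 0 T ∧ ∀ᵐ u ∂ν t, 2 * ‖u‖ ≤ K := by
    filter_upwards [hball, ae_restrict_mem measurableSet_Ico] with t hb ht
    have := hprob t ht
    refine ⟨ht, (ae_norm_lt_of_measure_ball_eq_one hb).mono fun u hu => ?_⟩
    linarith [Nat.le_ceil (2 * M)]
  have hint : Integrable (fun t => sqStructFn d (ν t) r) (volume.restrict (Set.Ico 0 T)) := by
    refine Integrable.congr (.of_bound (hmeas.measurable_integral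
      (lipschitzWith_truncMeanSqIncrement r K).continuous
      (norm_truncMeanSqIncrement_le r K)).aestronglyMeasurable ((K : ℝ) ^ 2) ?_) ?_
    · filter_upwards [hK] with t ⟨ht, _⟩
      have := hprob t ht
      exact (norm_integral_le_of_norm_le_const
        (ae_of_all _ (norm_truncMeanSqIncrement_le r K))).trans_eq (by simp)
    · filter_upwards [hK] with t ⟨_, hKt⟩
      exact (sqStructFn_eq_integral_truncMeanSqIncrement hKt).symm
  rw [sqStructFnT, ofReal_integral_eq_lintegral_ofReal hint
    (ae_of_all _ fun _ => sqStructFn_nonneg _ _)]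
  refine lintegral_congr_ae ?_
  filter_upwards [hK] with t ⟨ht, hKt⟩
  have := hprob t ht
  exact lintegral_meanSqIncrement_eq hKt

theorem sqStructFnT_le_of_tendsto_dT
    (hmeasn : ∀ n, WeakStarMeasurable d (μn n)) (hmeas : WeakStarMeasurable d μ)
    (hprobn : ∀ n, ∀ t ∈ Set.Ico (0 : ℝ) T, IsProbabilityMeasure (μn n t))
    (hprob : ∀ t ∈ Set.Ico (0 : ℝ) T, IsProbabilityMeasure (μ t))
    (hballn : ∀ n, ∀ᵐ t ∂(volume.restrict (Set.Ico (0 : ℝ) T)), μn n t (ball (0 : L2 d) M) = 1)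
    (hconv : Tendsto (fun n => dT d T (μn n) μ) atTop (𝓝 0)) {r C : ℝ}
    (hSn : ∀ n, sqStructFnT d (μn n) T r ≤ C) : sqStructFnT d μ T r ≤ C := by
  have hC : 0 ≤ C :=
    (integral_nonneg fun _ => sqStructFn_nonneg _ _).trans (hSn 0)
  have hψ0 : ∀ (u : L2 d) h, 0 ≤ incrementNorm d u h := fun _ _ => norm_nonneg _
  rw [← ENNReal.ofReal_le_ofReal_iff hC]
  refine (ofReal_sqStructFnT_le μ T r).trans ?_
  simp_rw [← iSup_ofReal_truncMeanSqIncrement r]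
  refine setLIntegral_lintegral_iSup_le_of_tendsto_dT hmeasn hmeas hprobn hprob hconv
    measurableSet_Ico subset_rfl (fun K => ⟨_, lipschitzWith_truncMeanSqIncrement r K⟩)
    truncSqIntegral_nonneg (fun K => ⟨_, truncSqIntegral_le_sq hψ0 K⟩)
    (monotone_truncSqIntegral hψ0 fun u => (continuous_incrementNorm u).measurable) fun n => ?_
  simp_rw [iSup_ofReal_truncMeanSqIncrement,
    setLIntegral_lintegral_meanSqIncrement_eq (hmeasn n) (hprobn n) (hballn n)]
  exact ENNReal.ofReal_le_ofReal (hSn n)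

end Limit

theorem limit_L2_bound_and_structFn_bound_general (d : ℕ) (T M : ℝ)
    (ω : ℝ → ℝ)
    (μn : ℕ → ℝ → Measure (L2 d)) (μ : ℝ → Measure (L2 d))
    (hmeasn : ∀ n, WeakStarMeasurable d (μn n)) (hmeas : WeakStarMeasurable d μ)
    (hprobn : ∀ n, ∀ t ∈ Set.Ico (0 : ℝ) T, IsProbabilityMeasure (μn n t))
    (hprob : ∀ t ∈ Set.Ico (0 : ℝ) T, IsProbabilityMeasure (μ t))
    (hballn : ∀ n, ∀ᵐ t ∂(volume.restrict (Set.Ico (0 : ℝ) T)),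
      μn n t (ball (0 : L2 d) M) = 1)
    (hSn : ∀ n, ∀ r : ℝ, 0 < r → sqStructFnT d (μn n) T r ≤ ω r)
    (hconv : Filter.Tendsto (fun n => dT d T (μn n) μ) Filter.atTop (nhds 0)) :
    (∀ᵐ t ∂(volume.restrict (Set.Ico (0 : ℝ) T)),
        (∫ u, ‖u‖ ^ 2 ∂(μ t)) ≤ M ^ 2) ∧
      ∀ r : ℝ, 0 < r → sqStructFnT d μ T r ≤ ω r :=
  ⟨ae_integral_norm_sq_le_of_tendsto_dT hmeasn hmeas hprobn hprob hballn hconv,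
    fun r hr => sqStructFnT_le_of_tendsto_dT hmeasn hmeas hprobn hprob hballn hconv
      fun n => hSn n r hr⟩

/-- **Theorem 2.14, properties of the limit.** If `(μⁿ_t)` are weak-* measurable families of
Borel probability measures on `L²_x`, each concentrated on `B_M(0)` for a.e. `t ∈ [0,T)` and
with the uniform structure-function bound `S²_r(μⁿ_·,T)² ≤ ω(r)`, and if
`∫₀^T W₁(μⁿ_t, μ_t) dt → 0`, then the limit family satisfies the `L²`-bound
`∫ ‖u‖² dμ_t(u) ≤ M²` for a.e. `t ∈ [0,T)` and the same structure-function bound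
`S²_r(μ_·,T)² ≤ ω(r)` for every `r > 0`. -/
theorem limit_L2_bound_and_structFn_bound (d : ℕ) (T M : ℝ) (hT : 0 < T) (hM : 0 < M)
    (ω : ℝ → ℝ) (hω_nonneg : ∀ r, 0 ≤ ω r)
    (hω : Filter.Tendsto ω (nhdsWithin 0 (Set.Ioi 0)) (nhds 0))
    (μn : ℕ → ℝ → Measure (L2 d)) (μ : ℝ → Measure (L2 d))
    (hmeasn : ∀ n, WeakStarMeasurable d (μn n)) (hmeas : WeakStarMeasurable d μ)
    (hprobn : ∀ n, ∀ t ∈ Set.Ico (0 : ℝ) T, IsProbabilityMeasure (μn n t))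
    (hprob : ∀ t ∈ Set.Ico (0 : ℝ) T, IsProbabilityMeasure (μ t))
    (hballn : ∀ n, ∀ᵐ t ∂(volume.restrict (Set.Ico (0 : ℝ) T)),
      μn n t (ball (0 : L2 d) M) = 1)
    (hSn : ∀ n, ∀ r : ℝ, 0 < r → sqStructFnT d (μn n) T r ≤ ω r)
    (hconv : Filter.Tendsto (fun n => dT d T (μn n) μ) Filter.atTop (nhds 0)) :
    (∀ᵐ t ∂(volume.restrict (Set.Ico (0 : ℝ) T)),
        (∫ u, ‖u‖ ^ 2 ∂(μ t)) ≤ M ^ 2) ∧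
      ∀ r : ℝ, 0 < r → sqStructFnT d μ T r ≤ ω r :=
  limit_L2_bound_and_structFn_bound_general d T M ω μn μ hmeasn hmeas hprobn hprob hballn hSn hconv
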